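/- Let G be a connected chordal graph and let S_1 ≠ S_2 be two minimal vertex separators of G. Then the set of maximal cliques containing S_1 is different from the set of maximal cliques containing S_2. -/

import Mathlib

namespace Chordal

variable {V : Type*} [Fintype V]

/-- A closed walk has a chord: an edge of `G` joining two support vertices that is
not an edge of the walk. -/
def HasChord (G : SimpleGraph V) {u : V} (c : G.Walk u u) : Prop :=
  ∃ v w, v ∈ c.support ∧ w ∈ c.support ∧ G.Adj v w ∧ s(v, w) ∉ c.edges

/-- A graph is chordal if every cycle of length at least 4 has a chord. -/
def IsChordal (G : SimpleGraph V) : Prop :=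
  ∀ ⦃u : V⦄ (c : G.Walk u u), c.IsCycle → 4 ≤ c.length → HasChord G c

/-- A maximal clique of `G`. -/
def IsMaxClique (G : SimpleGraph V) (s : Set V) : Prop :=
  G.IsClique s ∧ ∀ t : Set V, G.IsClique t → s ⊆ t → s = t

/-- A maximal clique of the induced subgraph `G(W)`. -/
def IsMaxCliqueOn (G : SimpleGraph V) (W s : Set V) : Prop :=
  s ⊆ W ∧ G.IsClique s ∧ ∀ t : Set V, t ⊆ W → G.IsClique t → s ⊆ t → s = t

/-- There is a walk from `u` to `w` staying inside `W` and avoiding `S`. -/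
def ReachWithin (G : SimpleGraph V) (W S : Set V) (u w : V) : Prop :=
  ∃ p : G.Walk u w, ∀ x ∈ p.support, x ∈ W ∧ x ∉ S

/-- `S` separates `u` from `w` in the induced subgraph `G(W)`. -/
def SeparatesOn (G : SimpleGraph V) (W S : Set V) (u w : V) : Prop :=
  u ∈ W ∧ w ∈ W ∧ u ∉ S ∧ w ∉ S ∧ u ≠ w ∧ ¬ ReachWithin G W S u w

/-- `S` is a minimal vertex separator of the induced subgraph `G(W)`:
for some pair `u, w` it is an inclusion-minimal set separating `u` from `w`. -/
def IsMinSeparatorOn (G : SimpleGraph V) (W S : Set V) : Prop :=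
  S ⊆ W ∧ ∃ u w, SeparatesOn G W S u w ∧ ∀ S' ⊂ S, ¬ SeparatesOn G W S' u w

/-- `S` is a minimal vertex separator of `G`. -/
def IsMinSeparator (G : SimpleGraph V) (S : Set V) : Prop :=
  IsMinSeparatorOn G Set.univ S

/-- `S` is inclusion-minimal among the minimal vertex separators of `G`. -/
def IsInclMinSeparator (G : SimpleGraph V) (S : Set V) : Prop :=
  IsMinSeparator G S ∧ ∀ S' : Set V, IsMinSeparator G S' → S' ⊆ S → S' = S

/-- `Γ` is a connected component of `G(V \ S)`. -/
def IsCompOutside (G : SimpleGraph V) (S Γ : Set V) : Prop :=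
  ∃ u, u ∉ S ∧ Γ = {w | ReachWithin G Set.univ S u w}

/-- A vertex is simplicial if its neighborhood is a clique. -/
def IsSimplicial (G : SimpleGraph V) (v : V) : Prop :=
  G.IsClique (G.neighborSet v)

/-- The simplicial component of a clique `C`: the simplicial vertices of `G` in `C`. -/
def Simp (G : SimpleGraph V) (C : Set V) : Set V :=
  {v ∈ C | IsSimplicial G v}

/-- The non-simplicial component of a clique `C`. -/
def Sep (G : SimpleGraph V) (C : Set V) : Set V :=
  C \ Simp G C

/-- `C` is a boundary clique (simply separated clique): a maximal clique such that
`Sep C = C ∩ C'` for some other maximal clique `C'`. -/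
def IsBoundaryClique (G : SimpleGraph V) (C : Set V) : Prop :=
  IsMaxClique G C ∧ ∃ C' : Set V, IsMaxClique G C' ∧ C' ≠ C ∧ Sep G C = C ∩ C'

/-- The induced subgraph on `W`, kept on the same vertex type. -/
def restrictS (G : SimpleGraph V) (W : Set V) : SimpleGraph V where
  Adj u v := G.Adj u v ∧ u ∈ W ∧ v ∈ W
  symm := ⟨fun u v ⟨h, hu, hv⟩ => ⟨h.symm, hv, hu⟩⟩
  loopless := ⟨fun u ⟨h, _, _⟩ => G.irrefl h⟩

/-- The vertex subset `A` induces a connected subgraph of `T`. -/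
def ConnOn {α : Type*} (T : SimpleGraph α) (A : Set α) : Prop :=
  A.Nonempty ∧ ∀ u ∈ A, ∀ v ∈ A, ∃ p : T.Walk u v, ∀ x ∈ p.support, x ∈ A

/-- The induced subgraph `G(W)` is complete. -/
def CompleteOn (G : SimpleGraph V) (W : Set V) : Prop :=
  ∀ u ∈ W, ∀ v ∈ W, u ≠ v → G.Adj u v

/-- A clique tree of `G`: a tree on the maximal cliques of `G` satisfying the
junction property. -/
def IsCliqueTree (G : SimpleGraph V) (T : SimpleGraph {s : Set V // IsMaxClique G s}) : Prop :=
  T.IsTree ∧ ∀ (C₁ C₂ : {s : Set V // IsMaxClique G s}) (p : T.Walk C₁ C₂), p.IsPath →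
    ∀ C₃ ∈ p.support, C₁.val ∩ C₂.val ⊆ C₃.val

/-- A leaf (endpoint) of a graph: a vertex with exactly one neighbor. -/
def IsLeaf {α : Type*} (T : SimpleGraph α) (a : α) : Prop :=
  ∃! b, T.Adj a b

/-- The union of the cliques preceding position `k` in a sequence. -/
def prefUnion {K : ℕ} (f : Fin K → Set V) (k : Fin K) : Set V :=
  {v | ∃ j, j < k ∧ v ∈ f j}

/-- A perfect sequence of the maximal cliques of the induced subgraph `G(W)`:
an enumeration of the maximal cliques of `G(W)` with the running intersection property. -/
def IsPerfectSeqOn (G : SimpleGraph V) (W : Set V) {K : ℕ} (f : Fin K → Set V) : Prop :=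
  Function.Injective f ∧ (∀ s : Set V, IsMaxCliqueOn G W s ↔ ∃ k, f k = s) ∧
  ∀ k : Fin K, 0 < (k : ℕ) →
    G.IsClique (prefUnion f k ∩ f k) ∧ ∃ k' : Fin K, k' < k ∧ prefUnion f k ∩ f k ⊆ f k'

/-- A perfect sequence of the maximal cliques of `G`. -/
def IsPerfectSeq (G : SimpleGraph V) {K : ℕ} (f : Fin K → Set V) : Prop :=
  Function.Injective f ∧ (∀ s : Set V, IsMaxClique G s ↔ ∃ k, f k = s) ∧
  ∀ k : Fin K, 0 < (k : ℕ) →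
    G.IsClique (prefUnion f k ∩ f k) ∧ ∃ k' : Fin K, k' < k ∧ prefUnion f k ∩ f k ⊆ f k'

/-- The closed neighborhood of a vertex. -/
def closedNbhd (G : SimpleGraph V) (v : V) : Set V :=
  insert v (G.neighborSet v)

end Chordal

/-!
By Dirac's theorem a minimal separator `S` of a chordal graph is a clique, and each of the two
full components of `G - S` it separates contains a vertex adjacent to all of `S`. Extending `S`
by such vertices gives maximal cliques `C, C' ⊃ S` with `C ∩ C' = S`, so `S` is the intersection
of the maximal cliques strictly containing it and is determined by them.
-/

namespace SimpleGraph.Walk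

variable {V : Type*} {G : SimpleGraph V}

lemma IsPath.eq_of_mem_support_append {u v w x : V} {p : G.Walk u v} {q : G.Walk v w}
    (hpq : (p.append q).IsPath) (hp : x ∈ p.support) (hq : x ∈ q.support) : x = v := by
  have hnd := hpq.support_nodup
  rw [support_append, List.nodup_append] at hnd
  rw [← cons_tail_support, List.mem_cons] at hq
  exact hq.resolve_right fun hq' => hnd.2.2 x hp x hq' rfl

lemma IsChordless.of_append_left {u v w : V} {p : G.Walk u v} {q : G.Walk v w}
    (hpq : (p.append q).IsPath) (h : (p.append q).IsChordless) : p.IsChordless := by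
  rw [isChordless_iff_forall_mem_edges]
  intro x y hx hy hxy
  have he := h.mem_edges ((mem_support_append_iff _ _).2 (.inl hx))
    ((mem_support_append_iff _ _).2 (.inl hy)) hxy
  rw [edges_append, List.mem_append] at he
  refine he.resolve_right fun he => hxy.ne ?_
  rw [hpq.eq_of_mem_support_append hx (q.fst_mem_support_of_mem_edges he),
    hpq.eq_of_mem_support_append hy (q.snd_mem_support_of_mem_edges he)]

lemma IsChordless.of_append_right {u v w : V} {p : G.Walk u v} {q : G.Walk v w}
    (hpq : (p.append q).IsPath) (h : (p.append q).IsChordless) : q.IsChordless := by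
  rw [isChordless_iff_forall_mem_edges]
  intro x y hx hy hxy
  have he := h.mem_edges ((mem_support_append_iff _ _).2 (.inr hx))
    ((mem_support_append_iff _ _).2 (.inr hy)) hxy
  rw [edges_append, List.mem_append] at he
  refine he.resolve_left fun he => hxy.ne ?_
  rw [hpq.eq_of_mem_support_append (p.fst_mem_support_of_mem_edges he) hx,
    hpq.eq_of_mem_support_append (p.snd_mem_support_of_mem_edges he) hy]

lemma IsChordless.takeUntil [DecidableEq V] {u v w : V} {p : G.Walk u v} (hp : p.IsPath)
    (h : p.IsChordless) (hw : w ∈ p.support) : (p.takeUntil w hw).IsChordless := by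
  rw [← p.take_spec hw] at hp h
  exact h.of_append_left hp

lemma IsChordless.dropUntil [DecidableEq V] {u v w : V} {p : G.Walk u v} (hp : p.IsPath)
    (h : p.IsChordless) (hw : w ∈ p.support) : (p.dropUntil w hw).IsChordless := by
  rw [← p.take_spec hw] at hp h
  exact h.of_append_right hp

lemma exists_length_lt_of_isChord {u v x y : V} (p : G.Walk u v) (hx : x ∈ p.support)
    (hy : y ∈ p.support) (hxy : G.Adj x y) (he : s(x, y) ∉ p.edges) :
    ∃ q : G.Walk u v, q.support ⊆ p.support ∧ q.length < p.length := by
  classical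
  induction p with
  | nil =>
    rw [support_nil, List.mem_singleton] at hx hy
    exact absurd (hx ▸ hy ▸ hxy) G.irrefl
  | @cons u a v hua q ih =>
    have skip : ∀ z ∈ q.support, G.Adj u z → s(u, z) ∉ (cons hua q).edges →
        ∃ r : G.Walk u v, r.support ⊆ (cons hua q).support ∧ r.length < (cons hua q).length := by
      intro z hz huz hne
      have hza : z ≠ a := by rintro rfl; exact hne (by simp)
      refine ⟨cons huz (q.dropUntil z hz), ?_, ?_⟩
      · rw [support_cons, support_cons]
        exact List.cons_subset_cons _ (q.support_dropUntil_subset_support hz)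
      · simpa using length_dropUntil_lt_length hz hza
    rw [support_cons, List.mem_cons] at hx hy
    rcases hx with rfl | hx <;> rcases hy with rfl | hy
    · exact absurd hxy G.irrefl
    · exact skip y hy hxy he
    · exact skip x hx hxy.symm (by rwa [Sym2.eq_swap])
    · obtain ⟨r, hrq, hlt⟩ := ih hx hy fun h => he (by simp [h])
      refine ⟨cons hua r, ?_, by simpa using hlt⟩
      rw [support_cons, support_cons]
      exact List.cons_subset_cons _ hrq

lemma exists_isPath_isChordless (A : Set V) {u v : V} (p : G.Walk u v)
    (hp : ∀ x ∈ p.support, x ∈ A) :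
    ∃ q : G.Walk u v, q.IsPath ∧ q.IsChordless ∧ ∀ x ∈ q.support, x ∈ A := by
  classical
  have hex : ∃ n, ∃ q : G.Walk u v, q.IsPath ∧ (∀ x ∈ q.support, x ∈ A) ∧ q.length = n :=
    ⟨_, p.bypass, p.bypass_isPath, fun x hx => hp x (p.support_bypass_subset_support hx), rfl⟩
  obtain ⟨q, hq, hqA, hlen⟩ := Nat.find_spec hex
  refine ⟨q, hq, ?_, hqA⟩
  rw [isChordless_iff_forall_mem_edges]
  intro x y hx hy hxy
  by_contra he
  obtain ⟨r, hrq, hlt⟩ := q.exists_length_lt_of_isChord hx hy hxy he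
  refine Nat.find_min hex (lt_of_le_of_lt r.length_bypass_le_length (hlen ▸ hlt))
    ⟨r.bypass, r.bypass_isPath, fun x hx => hqA x (hrq (r.support_bypass_subset_support hx)), rfl⟩

end SimpleGraph.Walk

namespace Chordal

open SimpleGraph Walk

variable {V : Type*} {G : SimpleGraph V} {S : Set V} {u w a b : V}

/-- The component of `u` in `G - S`; empty when `u ∈ S`. -/
def compOutside (G : SimpleGraph V) (S : Set V) (u : V) : Set V :=
  {w | ReachWithin G Set.univ S u w}

def IsFullComp (G : SimpleGraph V) (S : Set V) (u : V) : Prop :=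
  ∀ s ∈ S, ∃ a ∈ compOutside G S u, G.Adj a s

lemma mem_compOutside_self (hu : u ∉ S) : u ∈ compOutside G S u :=
  ⟨nil, by simpa using hu⟩

lemma notMem_of_mem_compOutside (h : w ∈ compOutside G S u) : w ∉ S :=
  let ⟨p, hp⟩ := h
  (hp w p.end_mem_support).2

lemma mem_compOutside_of_mem_support {p : G.Walk u w} (hp : ∀ x ∈ p.support, x ∉ S) {x : V}
    (hx : x ∈ p.support) : x ∈ compOutside G S u := by
  classical
  exact ⟨p.takeUntil x hx, fun y hy => ⟨trivial, hp y (p.support_takeUntil_subset_support hx hy)⟩⟩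

lemma mem_compOutside_of_adj (ha : a ∈ compOutside G S u) (hab : G.Adj a b) (hb : b ∉ S) :
    b ∈ compOutside G S u := by
  obtain ⟨p, hp⟩ := ha
  refine ⟨p.concat hab, fun x hx => ⟨trivial, ?_⟩⟩
  rw [support_concat, List.mem_append, List.mem_singleton] at hx
  rcases hx with hx | rfl
  exacts [(hp x hx).2, hb]

lemma mem_compOutside_symm (h : w ∈ compOutside G S u) : u ∈ compOutside G S w := by
  obtain ⟨p, hp⟩ := h
  exact ⟨p.reverse, fun x hx => hp x (by rwa [support_reverse, List.mem_reverse] at hx)⟩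

lemma mem_compOutside_trans (ha : a ∈ compOutside G S u) (hw : w ∈ compOutside G S a) :
    w ∈ compOutside G S u := by
  obtain ⟨p, hp⟩ := ha
  obtain ⟨q, hq⟩ := hw
  refine ⟨p.append q, fun x hx => ?_⟩
  rcases (mem_support_append_iff _ _).1 hx with hx | hx
  exacts [hp x hx, hq x hx]

lemma exists_walk_in_compOutside (ha : a ∈ compOutside G S u) (hb : b ∈ compOutside G S u) :
    ∃ p : G.Walk a b, ∀ x ∈ p.support, x ∈ compOutside G S u := by
  obtain ⟨p, hp⟩ := ha
  obtain ⟨q, hq⟩ := hb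
  refine ⟨p.reverse.append q, fun x hx => ?_⟩
  rw [mem_support_append_iff, support_reverse, List.mem_reverse] at hx
  rcases hx with hx | hx
  exacts [mem_compOutside_of_mem_support (fun y hy => (hp y hy).2) hx,
    mem_compOutside_of_mem_support (fun y hy => (hq y hy).2) hx]

lemma mem_compOutside_of_isClique {C : Set V} (hC : G.IsClique C) (ha : a ∈ C)
    (hau : a ∈ compOutside G S u) (hb : b ∈ C) (hbS : b ∉ S) : b ∈ compOutside G S u := by
  rcases eq_or_ne a b with rfl | hab
  exacts [hau, mem_compOutside_of_adj hau (hC ha hb hab) hbS]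

lemma IsFullComp.exists_walk (hf : IsFullComp G S u) {s : V} (hs : s ∈ S)
    (hb : b ∈ compOutside G S u) :
    ∃ p : G.Walk s b, ∀ x ∈ p.support, x = s ∨ x ∈ compOutside G S u := by
  obtain ⟨a, ha, has⟩ := hf s hs
  obtain ⟨p, hp⟩ := exists_walk_in_compOutside ha hb
  refine ⟨cons has.symm p, fun x hx => ?_⟩
  rw [support_cons, List.mem_cons] at hx
  exact hx.imp_right (hp x)

lemma exists_adj_of_walk (hu : u ∉ S) (hw : w ∉ compOutside G S u) {s : V} (p : G.Walk u w)
    (hp : ∀ x ∈ p.support, x ∈ S → x = s) : ∃ a ∈ compOutside G S u, G.Adj a s := by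
  obtain ⟨d, hd, hd₁, hd₂⟩ := p.exists_boundary_dart _ (mem_compOutside_self hu) hw
  have hdS : d.snd ∈ S := by_contra fun h => hd₂ (mem_compOutside_of_adj hd₁ d.adj h)
  exact ⟨d.fst, hd₁, hp _ (p.dart_snd_mem_support_of_mem_darts hd) hdS ▸ d.adj⟩

lemma IsMinSeparator.exists_isFullComp (h : IsMinSeparator G S) :
    ∃ u w, u ∉ S ∧ w ∉ S ∧ w ∉ compOutside G S u ∧ IsFullComp G S u ∧ IsFullComp G S w := by
  obtain ⟨-, u, w, ⟨-, -, hu, hw, huw, hsep⟩, hmin⟩ := h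
  have hreach : ∀ s ∈ S, ∃ p : G.Walk u w, ∀ x ∈ p.support, x ∈ S → x = s := by
    intro s hs
    have hsep' := hmin _ (Set.sdiff_singleton_ssubset.2 hs)
    obtain ⟨p, hp⟩ : ReachWithin G Set.univ (S \ {s}) u w := by
      by_contra hnr
      exact hsep' ⟨trivial, trivial, fun h => hu h.1, fun h => hw h.1, huw, hnr⟩
    exact ⟨p, fun x hx hxS => by_contra fun hxs => (hp x hx).2 ⟨hxS, hxs⟩⟩
  refine ⟨u, w, hu, hw, hsep, fun s hs => ?_, fun s hs => ?_⟩
  · obtain ⟨p, hp⟩ := hreach s hs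
    exact exists_adj_of_walk hu hsep p hp
  · obtain ⟨p, hp⟩ := hreach s hs
    refine exists_adj_of_walk hw (fun h => hsep (mem_compOutside_symm h)) p.reverse fun x hx => ?_
    exact hp x (by rwa [support_reverse, List.mem_reverse] at hx)

lemma IsChordal.exists_adj_of_isChordless (hG : IsChordal G) {a b : V} {P : G.Walk a b}
    {Q : G.Walk b a} (hP : P.IsPath) (hQ : Q.IsPath) (hPc : P.IsChordless) (hQc : Q.IsChordless)
    (hPQ : ∀ x ∈ P.support, x ∈ Q.support → x = a ∨ x = b) (hlen : 4 ≤ P.length + Q.length) :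
    ∃ x ∈ P.support, ∃ y ∈ Q.support, x ∉ Q.support ∧ y ∉ P.support ∧ G.Adj x y := by
  have htail : P.support.tail.Disjoint Q.support.tail := by
    intro x hxP hxQ
    rcases hPQ x (List.mem_of_mem_tail hxP) (List.mem_of_mem_tail hxQ) with rfl | rfl
    · exact (List.nodup_cons.1 (P.cons_tail_support ▸ hP.support_nodup)).1 hxP
    · exact (List.nodup_cons.1 (Q.cons_tail_support ▸ hQ.support_nodup)).1 hxQ
  obtain ⟨v, w, hv, hw, hvw, hne⟩ :=
    hG (P.append Q) (hP.isCycle_append hQ htail (by omega)) (by rw [length_append]; exact hlen)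
  rw [mem_support_append_iff] at hv hw
  rw [edges_append, List.mem_append] at hne
  have hnP : ¬ (v ∈ P.support ∧ w ∈ P.support) := fun h => hne (.inl (hPc.mem_edges h.1 h.2 hvw))
  have hnQ : ¬ (v ∈ Q.support ∧ w ∈ Q.support) := fun h => hne (.inr (hQc.mem_edges h.1 h.2 hvw))
  by_cases hvP : v ∈ P.support
  · exact ⟨v, hvP, w, by tauto, by tauto, by tauto, hvw⟩
  · exact ⟨w, by tauto, v, by tauto, by tauto, hvP, hvw.symm⟩

lemma IsChordal.adj_of_mem_support (hG : IsChordal G) {x y t : V} {P : G.Walk x y}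
    (hP : P.IsPath) (hPc : P.IsChordless) (ht : t ∉ P.support) (htx : G.Adj t x)
    (hty : G.Adj t y) : ∀ v ∈ P.support, G.Adj t v := by
  classical
  induction hn : P.length using Nat.strong_induction_on generalizing x y with
  | _ n ih =>
  intro v hv
  by_cases hvx : v = x
  · exact hvx ▸ htx
  by_cases hvy : v = y
  · exact hvy ▸ hty
  have hlen : 2 ≤ P.length := by
    have h1 : (P.takeUntil v hv).length ≠ 0 := fun h => hvx (eq_of_length_eq_zero h).symm
    have h2 := length_takeUntil_lt_length hv hvy
    omega
  have hxy : x ≠ y := by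
    rintro rfl
    have := length_eq_zero_iff.mpr (isPath_iff_nil.mp hP)
    omega
  have hnyx : ¬ G.Adj y x := fun h => by
    have := hP.length_eq_one_of_mem_edges
      (hPc.mem_edges P.start_mem_support P.end_mem_support h.symm)
    omega
  let Q : G.Walk y x := cons hty.symm (cons htx nil)
  have hQ : Q.IsPath := by simp [Q, hty.ne', htx.ne, hxy.symm]
  have hQc : Q.IsChordless := by
    have hnxy : ¬ G.Adj x y := fun h => hnyx h.symm
    rw [isChordless_iff_forall_mem_edges]
    simp only [Q, support_cons, support_nil, edges_cons, edges_nil, List.mem_cons,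
      List.not_mem_nil, or_false]
    rintro a b (rfl | rfl | rfl) (rfl | rfl | rfl) hab <;> simp_all [Sym2.eq_swap]
  -- the chord of the cycle `P ++ Q` joins `t` to an inner vertex `w` of `P`
  obtain ⟨w, hwP, b, hbQ, hwQ, hbP, hwb⟩ := hG.exists_adj_of_isChordless hP hQ hPc hQc
    (fun z hzP hzQ => by simp only [Q, support_cons, support_nil, List.mem_cons,
      List.not_mem_nil, or_false] at hzQ; grind)
    (by simp [Q]; omega)
  have hbt : b = t := by
    simp only [Q, support_cons, support_nil, List.mem_cons, List.not_mem_nil, or_false] at hbQ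
    grind [P.start_mem_support, P.end_mem_support]
  subst hbt
  have hwx : w ≠ x := fun h => hwQ (by simp [Q, h])
  have hwy : w ≠ y := fun h => hwQ (by simp [Q, h])
  rw [← P.take_spec hwP, mem_support_append_iff] at hv
  rcases hv with hv | hv
  · exact ih _ (hn ▸ length_takeUntil_lt_length hwP hwy) (hP.takeUntil hwP)
      (hPc.takeUntil hP hwP) (fun h => ht (P.support_takeUntil_subset_support hwP h)) htx
      hwb.symm rfl v hv
  · exact ih _ (hn ▸ length_dropUntil_lt_length hwP hwx) (hP.dropUntil hwP)
      (hPc.dropUntil hP hwP) (fun h => ht (P.support_dropUntil_subset_support hwP h)) hwb.symm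
      hty rfl v hv

lemma IsChordal.isClique_of_isFullComp (hG : IsChordal G) (hfu : IsFullComp G S u)
    (hfw : IsFullComp G S w) (huw : w ∉ compOutside G S u) : G.IsClique S := by
  have path : ∀ {v : V}, IsFullComp G S v → ∀ {s t : V}, s ∈ S → t ∈ S →
      ∃ P : G.Walk s t, P.IsPath ∧ P.IsChordless ∧
        ∀ x ∈ P.support, x = s ∨ x = t ∨ x ∈ compOutside G S v := by
    intro v hf s t hs ht
    obtain ⟨b, hb, hbt⟩ := hf t ht
    obtain ⟨p, hp⟩ := hf.exists_walk hs hb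
    refine exists_isPath_isChordless {x | x = s ∨ x = t ∨ x ∈ compOutside G S v}
      (p.concat hbt) fun x hx => ?_
    rw [support_concat, List.mem_append, List.mem_singleton] at hx
    rcases hx with hx | rfl
    · exact (hp x hx).elim .inl (.inr ∘ .inr)
    · exact .inr (.inl rfl)
  have hdisj : ∀ {x}, x ∈ compOutside G S u → x ∉ compOutside G S w := fun hxu hxw =>
    huw (mem_compOutside_trans hxu (mem_compOutside_symm hxw))
  intro s hs t ht hst
  by_contra hnst
  obtain ⟨P, hP, hPc, hPu⟩ := path hfu hs ht
  obtain ⟨Q, hQ, hQc, hQw⟩ := path hfw ht hs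
  have hlen : ∀ {a b : V} (p : G.Walk a b), a ≠ b → ¬ G.Adj a b → 2 ≤ p.length := by
    intro a b p hab hnab
    by_contra! h
    interval_cases hp : p.length
    exacts [hab (eq_of_length_eq_zero hp), hnab (adj_of_length_eq_one hp)]
  have hPQ : ∀ x ∈ P.support, x ∈ Q.support → x = s ∨ x = t := by
    intro x hxP hxQ
    rcases hPu x hxP with h | h | hxu
    · exact .inl h
    · exact .inr h
    · rcases hQw x hxQ with h | h | hxw
      exacts [.inr h, .inl h, (hdisj hxu hxw).elim]
  -- a chord of the cycle `P ++ Q` would join the two components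
  obtain ⟨x, hxP, y, hyQ, hxQ, hyP, hxy⟩ := hG.exists_adj_of_isChordless hP hQ hPc hQc hPQ
    (by have := hlen P hst hnst; have := hlen Q hst.symm fun h => hnst h.symm; omega)
  have hxu : x ∈ compOutside G S u := by
    rcases hPu x hxP with rfl | rfl | h
    exacts [(hxQ Q.end_mem_support).elim, (hxQ Q.start_mem_support).elim, h]
  have hyw : y ∈ compOutside G S w := by
    rcases hQw y hyQ with rfl | rfl | h
    exacts [(hyP P.end_mem_support).elim, (hyP P.start_mem_support).elim, h]
  exact hdisj (mem_compOutside_of_adj hxu hxy (notMem_of_mem_compOutside hyw)) hyw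

lemma IsChordal.exists_forall_adj_of_isFullComp [Finite V] (hG : IsChordal G)
    (hS : G.IsClique S) (hu : u ∉ S) (hf : IsFullComp G S u) :
    ∃ x ∈ compOutside G S u, ∀ s ∈ S, G.Adj x s := by
  obtain ⟨x, hx, hmax⟩ := (compOutside G S u).exists_max_image
    (fun x => (S ∩ G.neighborSet x).ncard) (Set.toFinite _) ⟨u, mem_compOutside_self hu⟩
  refine ⟨x, hx, fun s hs => by_contra fun hxs => ?_⟩
  obtain ⟨p, hp⟩ := hf.exists_walk hs hx
  obtain ⟨P, hP, hPc, hPA⟩ := exists_isPath_isChordless {y | y = s ∨ y ∈ compOutside G S u} p hp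
  have hPnil : ¬ P.Nil := fun h => notMem_of_mem_compOutside hx (h.eq ▸ hs)
  -- the neighbour `y` of `s` on `P` sees all of `S ∩ N(x)`, and `s` as well
  set y := P.snd
  have hy : y ∈ compOutside G S u :=
    (hPA y (List.mem_of_mem_tail (snd_mem_tail_support hPnil))).resolve_left (adj_snd hPnil).ne'
  have hsub : S ∩ G.neighborSet x ⊂ S ∩ G.neighborSet y := by
    refine (Set.ssubset_iff_of_subset fun t (htx : t ∈ S ∩ G.neighborSet x) => ?_).2
      ⟨s, ⟨hs, (adj_snd hPnil).symm⟩, fun h => hxs h.2⟩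
    obtain ⟨ht, hxt⟩ := htx
    refine ⟨ht, ?_⟩
    have hts : t ≠ s := by rintro rfl; exact hxs hxt
    have htP : t ∉ P.support := fun h =>
      (hPA t h).elim hts (fun htu => notMem_of_mem_compOutside htu ht)
    exact (hG.adj_of_mem_support hP hPc htP (hS ht hs hts) hxt.symm y
      (List.mem_of_mem_tail (snd_mem_tail_support hPnil))).symm
  exact (hmax y hy).not_gt (Set.ncard_lt_ncard hsub)

lemma exists_isMaxClique_superset [Finite V] {s : Set V} (hs : G.IsClique s) :
    ∃ C, IsMaxClique G C ∧ s ⊆ C := by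
  obtain ⟨C, ⟨hC, hsC⟩, hmax⟩ := Set.Finite.exists_maximalFor id
    {t : Set V | G.IsClique t ∧ s ⊆ t} (Set.toFinite _) ⟨s, hs, subset_rfl⟩
  exact ⟨C, ⟨hC, fun t ht hCt => hCt.antisymm (hmax ⟨ht, hsC.trans hCt⟩ hCt)⟩, hsC⟩

lemma IsChordal.exists_isMaxClique_inter_subset [Finite V] (hG : IsChordal G)
    (h : IsMinSeparator G S) :
    ∃ C C', IsMaxClique G C ∧ IsMaxClique G C' ∧ S ⊂ C ∧ S ⊂ C' ∧ C ∩ C' ⊆ S := by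
  obtain ⟨u, w, hu, hw, huw, hfu, hfw⟩ := h.exists_isFullComp
  have hS := hG.isClique_of_isFullComp hfu hfw huw
  have above : ∀ {v : V}, v ∉ S → IsFullComp G S v →
      ∃ C, IsMaxClique G C ∧ S ⊂ C ∧ ∀ z ∈ C, z ∉ S → z ∈ compOutside G S v := by
    intro v hv hf
    obtain ⟨x, hx, hxS⟩ := hG.exists_forall_adj_of_isFullComp hS hv hf
    obtain ⟨C, hC, hxSC⟩ := exists_isMaxClique_superset
      (isClique_insert.2 ⟨hS, fun s hs _ => hxS s hs⟩)
    have hxC : x ∈ C := hxSC (Set.mem_insert x S)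
    refine ⟨C, hC, (Set.ssubset_iff_of_subset ((Set.subset_insert x S).trans hxSC)).2
      ⟨x, hxC, notMem_of_mem_compOutside hx⟩, fun z hz hzS => ?_⟩
    exact mem_compOutside_of_isClique hC.1 hxC hx hz hzS
  obtain ⟨C, hC, hSC, hCu⟩ := above hu hfu
  obtain ⟨C', hC', hSC', hC'w⟩ := above hw hfw
  refine ⟨C, C', hC, hC', hSC, hSC', fun z ⟨hz, hz'⟩ => by_contra fun hzS => huw ?_⟩
  exact mem_compOutside_trans (hCu z hz hzS) (mem_compOutside_symm (hC'w z hz' hzS))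

lemma IsChordal.subset_of_isMinSeparator [Finite V] (hG : IsChordal G) {T : Set V}
    (h : IsMinSeparator G S)
    (hST : {C : Set V | IsMaxClique G C ∧ S ⊂ C} ⊆ {C : Set V | IsMaxClique G C ∧ T ⊂ C}) :
    T ⊆ S := by
  obtain ⟨C, C', hC, hC', hSC, hSC', hCC'⟩ := hG.exists_isMaxClique_inter_subset h
  exact fun x hx => hCC' ⟨(hST ⟨hC, hSC⟩).2.subset hx, (hST ⟨hC', hSC'⟩).2.subset hx⟩

theorem maxcliques_above_separator_ne_general {V : Type*} [Fintype V]
    (G : SimpleGraph V) (hch : IsChordal G)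
    (S₁ S₂ : Set V) (h₁ : IsMinSeparator G S₁) (h₂ : IsMinSeparator G S₂)
    (hne : S₁ ≠ S₂) :
    {C : Set V | IsMaxClique G C ∧ S₁ ⊂ C} ≠ {C : Set V | IsMaxClique G C ∧ S₂ ⊂ C} := fun heq =>
  hne ((hch.subset_of_isMinSeparator h₂ heq.ge).antisymm (hch.subset_of_isMinSeparator h₁ heq.le))

theorem maxcliques_above_separator_ne {V : Type*} [Fintype V]
    (G : SimpleGraph V) (hconn : G.Connected) (hch : IsChordal G)
    (S₁ S₂ : Set V) (h₁ : IsMinSeparator G S₁) (h₂ : IsMinSeparator G S₂)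
    (hne : S₁ ≠ S₂) :
    {C : Set V | IsMaxClique G C ∧ S₁ ⊂ C} ≠ {C : Set V | IsMaxClique G C ∧ S₂ ⊂ C} :=
  maxcliques_above_separator_ne_general G hch S₁ S₂ h₁ h₂ hne

end Chordal
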